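/- Let C = ∏_{i≥0} C_i and D = ∏_{j≥0} D_j be graded vector spaces realized as infinite products. The completed tensor product C ⊗̂ D := ∏_{n≥0} ⊕_{i+j=n} C_i ⊗ D_j receives a canonical injective linear map from the algebraic tensor product C ⊗ D, given on elementary tensors of homogeneous-component families by (c_i)_i ⊗ (d_j)_j ↦ (Σ_{i+j=n} c_i⊗d_j)_n. -/
import Mathlib


open scoped TensorProduct DirectSum

/-- If a family of linear maps `p i : M → P i` is jointly injective, then the family
`lTensor N (p i) : N ⊗ M → N ⊗ P i` is jointly injective (over a field). -/
theorem aux_lTensor_joint {k : Type} [Field k] {N M : Type} [AddCommGroup N] [Module k N]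
    [AddCommGroup M] [Module k M] {ι' : Type} {P : ι' → Type}
    [∀ i, AddCommGroup (P i)] [∀ i, Module k (P i)]
    (p : ∀ i, M →ₗ[k] P i) (hp : ∀ m : M, (∀ i, p i m = 0) → m = 0)
    (x : N ⊗[k] M) (hx : ∀ i, LinearMap.lTensor N (p i) x = 0) : x = 0 := by
  classical
  let b := Module.Basis.ofVectorSpace k N
  let E : ∀ (Q : Type _) [AddCommGroup Q] [Module k Q],
      N ⊗[k] Q ≃ₗ[k] ((Module.Basis.ofVectorSpaceIndex k N) →₀ Q) := fun Q _ _ =>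
    (TensorProduct.congr b.repr (LinearEquiv.refl k Q)).trans
      (TensorProduct.finsuppScalarLeft k Q _)
  have comm : ∀ (Q : Type _) [AddCommGroup Q] [Module k Q] (f : M →ₗ[k] Q)
      (y : N ⊗[k] M) (s : Module.Basis.ofVectorSpaceIndex k N),
      E Q (LinearMap.lTensor N f y) s = f (E M y s) := by
    intro Q _ _ f y s
    induction y using TensorProduct.induction_on with
    | zero => simp
    | tmul n m =>
      simp [E, TensorProduct.congr_tmul, TensorProduct.finsuppScalarLeft_apply_tmul_apply]
    | add y z hy hz => simp [map_add, hy, hz]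
  have hF : ∀ s, E M x s = 0 := by
    intro s
    apply hp
    intro i
    rw [← comm (P i) (p i) x s, hx i]
    simp
  have h0 : E M x = 0 := Finsupp.ext fun s => hF s
  exact (LinearEquiv.map_eq_zero_iff (E M)).mp h0

/-- Symmetric version: joint injectivity of `rTensor`. -/
theorem aux_rTensor_joint {k : Type} [Field k] {M N : Type} [AddCommGroup M] [Module k M]
    [AddCommGroup N] [Module k N] {ι' : Type} {P : ι' → Type}
    [∀ i, AddCommGroup (P i)] [∀ i, Module k (P i)]
    (p : ∀ i, M →ₗ[k] P i) (hp : ∀ m : M, (∀ i, p i m = 0) → m = 0)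
    (x : M ⊗[k] N) (hx : ∀ i, LinearMap.rTensor N (p i) x = 0) : x = 0 := by
  have hc : ∀ (i : ι') (z : M ⊗[k] N),
      LinearMap.lTensor N (p i) (TensorProduct.comm k M N z)
        = TensorProduct.comm k (P i) N (LinearMap.rTensor N (p i) z) := by
    intro i z
    induction z using TensorProduct.induction_on with
    | zero => simp
    | tmul m n => simp
    | add y z hy hz => simp [map_add, hy, hz]
  have : TensorProduct.comm k M N x = 0 := by
    apply aux_lTensor_joint p hp
    intro i
    rw [hc i x, hx i, map_zero]
  exact (TensorProduct.comm k M N).injective (by rw [this, map_zero])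

/-- Let `C = ∏_{i≥0} C_i` and `D = ∏_{j≥0} D_j` be graded vector spaces
realized as infinite products.  The completed tensor product
`C ⊗̂ D := ∏_{n≥0} ⊕_{i+j=n} C_i ⊗ D_j` receives a canonical linear map from the algebraic
tensor product `C ⊗ D`, sending `(c_i)_i ⊗ (d_j)_j` to `(Σ_{i+j=n} c_i ⊗ d_j)_n`, and this
canonical map is injective. -/
theorem completed_tensor_product_injective
    {k : Type} [Field k] (C D : ℕ → Type)
    [∀ i, AddCommGroup (C i)] [∀ i, Module k (C i)]
    [∀ j, AddCommGroup (D j)] [∀ j, Module k (D j)] :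
    Function.Injective
      (TensorProduct.lift
        (LinearMap.mk₂ k
          (fun (c : ∀ i, C i) (d : ∀ j, D j) =>
            (fun n => ∑ i : Fin (n + 1),
              DirectSum.lof k (Fin (n + 1)) (fun i : Fin (n + 1) => C (i : ℕ) ⊗[k] D (n - (i : ℕ))) i
                (c (i : ℕ) ⊗ₜ[k] d (n - (i : ℕ))) :
              ∀ n : ℕ, ⨁ i : Fin (n + 1), C (i : ℕ) ⊗[k] D (n - (i : ℕ))))
          (by intro c c' d; funext n
              simp [TensorProduct.add_tmul, Finset.sum_add_distrib])
          (by intro r c d; funext n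
              simp only [Pi.smul_apply, Finset.smul_sum]
              refine Finset.sum_congr rfl fun i _ => ?_
              rw [← TensorProduct.smul_tmul', map_smul])
          (by intro c d d'; funext n
              simp [TensorProduct.tmul_add, Finset.sum_add_distrib])
          (by intro r c d; funext n
              simp [TensorProduct.tmul_smul, Finset.smul_sum]))) := by
  classical
  set Φ := (TensorProduct.lift
        (LinearMap.mk₂ k
          (fun (c : ∀ i, C i) (d : ∀ j, D j) =>
            (fun n => ∑ i : Fin (n + 1),
              DirectSum.lof k (Fin (n + 1)) (fun i : Fin (n + 1) => C (i : ℕ) ⊗[k] D (n - (i : ℕ))) i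
                (c (i : ℕ) ⊗ₜ[k] d (n - (i : ℕ))) :
              ∀ n : ℕ, ⨁ i : Fin (n + 1), C (i : ℕ) ⊗[k] D (n - (i : ℕ))))
          (by intro c c' d; funext n
              simp [TensorProduct.add_tmul, Finset.sum_add_distrib])
          (by intro r c d; funext n
              simp only [Pi.smul_apply, Finset.smul_sum]
              refine Finset.sum_congr rfl fun i _ => ?_
              rw [← TensorProduct.smul_tmul', map_smul])
          (by intro c d d'; funext n
              simp [TensorProduct.tmul_add, Finset.sum_add_distrib])
          (by intro r c d; funext n
              simp [TensorProduct.tmul_smul, Finset.smul_sum])) :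
      ((∀ i, C i) ⊗[k] (∀ j, D j)) →ₗ[k]
        (∀ n : ℕ, ⨁ i : Fin (n + 1), C (i : ℕ) ⊗[k] D (n - (i : ℕ)))) with hΦ
  intro x y hxy
  rw [← sub_eq_zero]
  set z := x - y with hz
  have hzero : Φ z = 0 := by rw [hz, map_sub, hxy, sub_self]
  -- components: for every n and i ≤ n, the (i, n-i) component of z vanishes
  have hcomp : ∀ (n : ℕ) (i : Fin (n + 1)),
      TensorProduct.map (LinearMap.proj (R := k) (φ := C) (i : ℕ))
        (LinearMap.proj (R := k) (φ := D) (n - (i : ℕ))) z = 0 := by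
    intro n i
    have heq : TensorProduct.map (LinearMap.proj (R := k) (φ := C) (i : ℕ))
        (LinearMap.proj (R := k) (φ := D) (n - (i : ℕ)))
        = (DirectSum.component k (Fin (n + 1))
            (fun i : Fin (n + 1) => C (i : ℕ) ⊗[k] D (n - (i : ℕ))) i) ∘ₗ
          (LinearMap.proj (R := k) n) ∘ₗ Φ := by
      apply TensorProduct.ext'
      intro c d
      simp only [TensorProduct.map_tmul, LinearMap.coe_comp, Function.comp_apply,
        LinearMap.proj_apply, hΦ, TensorProduct.lift.tmul, LinearMap.mk₂_apply, map_sum,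
        map_sum]
      symm
      rw [Finset.sum_eq_single_of_mem i (Finset.mem_univ i)
        (fun i' _ hne => by rw [DirectSum.component.of, dif_neg hne]),
        DirectSum.component.lof_self]
    rw [heq]
    simp [hzero]
  -- hence all (i, j) components vanish
  have hall : ∀ i j : ℕ,
      TensorProduct.map (LinearMap.proj (R := k) (φ := C) i)
        (LinearMap.proj (R := k) (φ := D) j) z = 0 := by
    intro i j
    have key : ∀ (a : ℕ), a = j →
        TensorProduct.map (LinearMap.proj (R := k) (φ := C) i)
          (LinearMap.proj (R := k) (φ := D) a) z = 0 →
        TensorProduct.map (LinearMap.proj (R := k) (φ := C) i)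
          (LinearMap.proj (R := k) (φ := D) j) z = 0 := by
      rintro a rfl h; exact h
    exact key (i + j - i) (Nat.add_sub_cancel_left i j) (hcomp (i + j) ⟨i, by omega⟩)
  -- conclude by joint injectivity of coordinate projections, twice
  apply aux_rTensor_joint (fun i : ℕ => LinearMap.proj (R := k) (φ := C) i)
    (fun m hm => funext fun i => hm i)
  intro i
  apply aux_lTensor_joint (fun j : ℕ => LinearMap.proj (R := k) (φ := D) j)
    (fun m hm => funext fun j => hm j)
  intro j
  have := hall i j
  rw [← LinearMap.lTensor_comp_rTensor] at this
  exact this
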